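/- arXiv:1412.0214 — 8 statements merged into one kernel-verified Lean document; each statement's English description precedes it below -/
import Mathlib

section
/- (Wakamatsu's Lemma for triangulated categories; this is the case n = 1 of the paper's (n+2)-angulated Wakamatsu Lemma.) Let C be a pretriangulated category and let X be a class of objects of C, closed under isomorphisms, which is left closed under extensions. If ξ : x → c is an X-cover of an object c, then in every distinguished triangle x →ξ c → y → Σx completing ξ, one has Hom_C(x̃, y) = 0 for every object x̃ ∈ X. -/
open CategoryTheory Limits Pretriangulated

/-!
Given `f : x̃ ⟶ y` with `x̃ ∈ X`, the extension `x ⟶ e ⟶ x̃ ⟶ Σx` along `f ≫ φ` has `e ∈ X`.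
Comparing it with the triangle on `ξ` gives `h : e ⟶ c` under `x`, which factors through the
precover `ξ`; minimality of `ξ` makes `x ⟶ e` a split mono, so `f ≫ φ = 0`. Then `f` factors
through `γ`, hence through `ξ ≫ γ = 0`.
-/

section

variable {C : Type*} [Category C]

lemma mono_of_comp_eq_of_rightMinimal {x e c : C} {ξ : x ⟶ c}
    (hMin : ∀ g : x ⟶ x, g ≫ ξ = ξ → IsIso g) {i : x ⟶ e} {h : e ⟶ c} (hih : i ≫ h = ξ)
    {k : e ⟶ x} (hk : k ≫ ξ = h) : Mono i :=
  have : IsIso (i ≫ k) := hMin _ (by rw [Category.assoc, hk, hih])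
  mono_of_mono i k

variable [HasZeroObject C] [Preadditive C] [HasShift C ℤ]
  [∀ n : ℤ, (shiftFunctor C n).Additive] [Pretriangulated C]

lemma eq_zero_of_comp_mor₃_eq_zero {T : Triangle C}
    (hT : T ∈ distTriang C) {a : C} (f : a ⟶ T.obj₃) (hf : f ≫ T.mor₃ = 0)
    (hfac : ∀ u : a ⟶ T.obj₂, ∃ v : a ⟶ T.obj₁, v ≫ T.mor₁ = u) : f = 0 := by
  obtain ⟨u, rfl⟩ := T.coyoneda_exact₃ hT f hf
  obtain ⟨v, rfl⟩ := hfac u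
  rw [Category.assoc, comp_distTriang_mor_zero₁₂ T hT, comp_zero]

lemma comp_eq_zero_of_cover (X : Set C)
    (hExt : ∀ (x' x'' : C), x' ∈ X → x'' ∈ X → ∀ (δ : x'' ⟶ x'⟦(1 : ℤ)⟧),
      ∃ (e : C) (f : x' ⟶ e) (g : e ⟶ x''),
        e ∈ X ∧ Triangle.mk f g δ ∈ distTriang C)
    {x c : C} {ξ : x ⟶ c} (hx : x ∈ X)
    (hPrecover : ∀ (x' : C), x' ∈ X → ∀ f : x' ⟶ c, ∃ g : x' ⟶ x, g ≫ ξ = f)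
    (hMin : ∀ g : x ⟶ x, g ≫ ξ = ξ → IsIso g)
    {y : C} {γ : c ⟶ y} {φ : y ⟶ x⟦(1 : ℤ)⟧} (hT : Triangle.mk ξ γ φ ∈ distTriang C)
    {x' : C} (hx' : x' ∈ X) (f : x' ⟶ y) : f ≫ φ = 0 := by
  obtain ⟨e, i, p, he, hE⟩ := hExt x x' hx hx' (f ≫ φ)
  obtain ⟨h, hih, -⟩ : ∃ h : e ⟶ c, i ≫ h = 𝟙 x ≫ ξ ∧ p ≫ f = h ≫ γ :=
    complete_distinguished_triangle_morphism₂ _ _ hE hT (𝟙 x) f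
      (show (f ≫ φ) ≫ (𝟙 x)⟦(1 : ℤ)⟧' = f ≫ φ by simp)
  rw [Category.id_comp] at hih
  obtain ⟨k, hk⟩ := hPrecover e he h
  have : Mono i := mono_of_comp_eq_of_rightMinimal hMin hih hk
  exact Triangle.mor₃_eq_zero_of_mono₁ _ hE this

end

/-- **Wakamatsu's Lemma for triangulated categories** (case `n = 1` of the
`(n+2)`-angulated Wakamatsu Lemma): if `X` is a class of objects closed under
isomorphisms and left closed under extensions, and `ξ : x ⟶ c` is an `X`-cover,
then in any distinguished triangle `x ⟶ c ⟶ y ⟶ Σ x` completing `ξ` we have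
`Hom(x̃, y) = 0` for all `x̃ ∈ X`. -/
theorem wakamatsu_triangulated
    {C : Type*} [Category C] [HasZeroObject C] [Preadditive C] [HasShift C ℤ]
    [∀ n : ℤ, (shiftFunctor C n).Additive] [Pretriangulated C]
    (X : Set C)
    -- `X` is closed under isomorphisms
    (hIso : ∀ ⦃a b : C⦄, (a ≅ b) → a ∈ X → b ∈ X)
    -- `X` is left closed under extensions
    (hExt : ∀ (x' x'' : C), x' ∈ X → x'' ∈ X → ∀ (δ : x'' ⟶ x'⟦(1 : ℤ)⟧),
      ∃ (e : C) (f : x' ⟶ e) (g : e ⟶ x''),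
        e ∈ X ∧ Triangle.mk f g δ ∈ distTriang C)
    (x c : C) (ξ : x ⟶ c) (hx : x ∈ X)
    -- `ξ` is an `X`-precover of `c`
    (hPrecover : ∀ (x' : C), x' ∈ X → ∀ f : x' ⟶ c, ∃ g : x' ⟶ x, g ≫ ξ = f)
    -- minimality: `ξ` is an `X`-cover
    (hCover : ∀ g : x ⟶ x, g ≫ ξ = ξ → IsIso g)
    -- a distinguished triangle completing `ξ`
    (y : C) (γ : c ⟶ y) (φ : y ⟶ x⟦(1 : ℤ)⟧)
    (hT : Triangle.mk ξ γ φ ∈ distTriang C) :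
    ∀ (x' : C), x' ∈ X → ∀ f : x' ⟶ y, f = 0 := by
  intro x' hx' f
  exact eq_zero_of_comp_mor₃_eq_zero hT f
    (comp_eq_zero_of_cover X hExt hx hPrecover hCover hT hx' f) (hPrecover x' hx')
end

section
/- (Case n = 1 of the paper's Theorem on torsion classes in (n+2)-angulated categories.) Let C be a pretriangulated category and let X be a class of objects of C closed under isomorphisms, finite direct sums and direct summands, such that every object of C admits an X-cover, and such that X is left closed under extensions. Then X is a torsion class: for every object c of C there exists a distinguished triangle x → c → y → Σx with x ∈ X and Hom_C(x̃, y) = 0 for every x̃ ∈ X. -/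
open CategoryTheory Limits Pretriangulated

/-!
Take an `X`-cover `ξ : x ⟶ c` and complete it to a distinguished triangle
`x ⟶ c ⟶ y ⟶ x⟦1⟧`. For `f : x' ⟶ y` with `x' ∈ X`, realise `f ≫ φ` as the connecting map
of an extension `x ⟶ e ⟶ x'` with `e ∈ X`. The induced map `e ⟶ c` factors through `ξ`, and
minimality of the cover makes `x ⟶ e` a split mono, so `f ≫ φ = 0`. Then `f` factors through
`c ⟶ y`, hence through `ξ ≫ (c ⟶ y) = 0`.
-/

namespace CategoryTheory

section Covers

variable {C : Type*} [Category C]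

def IsPrecover (X : Set C) {x c : C} (ξ : x ⟶ c) : Prop :=
  ∀ x' : C, x' ∈ X → ∀ f : x' ⟶ c, ∃ g : x' ⟶ x, g ≫ ξ = f

def IsRightMinimal {x c : C} (ξ : x ⟶ c) : Prop :=
  ∀ g : x ⟶ x, g ≫ ξ = ξ → IsIso g

lemma IsPrecover.mono_of_comp_eq {X : Set C} {x e c : C} {ξ : x ⟶ c} (hξ : IsPrecover X ξ)
    (hmin : IsRightMinimal ξ) (he : e ∈ X) {a : x ⟶ e} {h : e ⟶ c} (hfac : a ≫ h = ξ) :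
    Mono a := by
  obtain ⟨g, hg⟩ := hξ e he h
  have : IsIso (a ≫ g) := hmin _ (by rw [Category.assoc, hg, hfac])
  exact mono_of_mono a g

end Covers

namespace Pretriangulated

variable {C : Type*} [Category C] [HasZeroObject C] [Preadditive C] [HasShift C ℤ]
  [∀ n : ℤ, (shiftFunctor C n).Additive] [Pretriangulated C]

lemma comp_mor₃_eq_zero_of_isPrecover_of_isRightMinimal {X : Set C} {x c y : C}
    {ξ : x ⟶ c} {γ : c ⟶ y} {φ : y ⟶ x⟦(1 : ℤ)⟧} (hT : Triangle.mk ξ γ φ ∈ distTriang C)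
    (hξ : IsPrecover X ξ) (hmin : IsRightMinimal ξ) {x' : C} (f : x' ⟶ y)
    (hext : ∃ (e : C) (a : x ⟶ e) (b : e ⟶ x'), e ∈ X ∧ Triangle.mk a b (f ≫ φ) ∈ distTriang C) :
    f ≫ φ = 0 := by
  obtain ⟨e, a, b, he, hT'⟩ := hext
  obtain ⟨h, hah, -⟩ := complete_distinguished_triangle_morphism₂ _ _ hT' hT (𝟙 x) f
    (by change (f ≫ φ) ≫ (𝟙 x)⟦(1 : ℤ)⟧' = f ≫ φ; rw [Functor.map_id, Category.comp_id])
  change a ≫ h = 𝟙 x ≫ ξ at hah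
  have : Mono a := hξ.mono_of_comp_eq hmin he (by rwa [Category.id_comp] at hah)
  exact Triangle.mor₃_eq_zero_of_mono₁ _ hT' this

lemma eq_zero_of_isPrecover_of_comp_mor₃_eq_zero {X : Set C} {x c y : C}
    {ξ : x ⟶ c} {γ : c ⟶ y} {φ : y ⟶ x⟦(1 : ℤ)⟧} (hT : Triangle.mk ξ γ φ ∈ distTriang C)
    (hξ : IsPrecover X ξ) {x' : C} (hx' : x' ∈ X) (f : x' ⟶ y) (hf : f ≫ φ = 0) : f = 0 := by
  obtain ⟨v, rfl⟩ := Triangle.coyoneda_exact₃ _ hT f hf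
  obtain ⟨w, rfl⟩ := hξ x' hx' v
  have hξγ : ξ ≫ γ = 0 := comp_distTriang_mor_zero₁₂ _ hT
  change (w ≫ ξ) ≫ γ = 0
  rw [Category.assoc, hξγ, comp_zero]

end Pretriangulated

end CategoryTheory

/-- Case `n = 1` of the theorem on torsion classes in `(n+2)`-angulated categories:
if `X` is closed under isomorphisms, finite direct sums and direct summands,
every object admits an `X`-cover, and `X` is left closed under extensions,
then `X` is a torsion class: every object `c` sits in a distinguished triangle
`x ⟶ c ⟶ y ⟶ Σ x` with `x ∈ X` and `Hom(x̃, y) = 0` for all `x̃ ∈ X`. -/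
theorem torsion_class_of_covering_left_closed
    {C : Type*} [Category C] [HasZeroObject C] [Preadditive C] [HasShift C ℤ]
    [∀ n : ℤ, (shiftFunctor C n).Additive] [Pretriangulated C]
    [HasBinaryBiproducts C]
    (X : Set C)
    -- `X` is closed under isomorphisms
    (hIso : ∀ ⦃a b : C⦄, (a ≅ b) → a ∈ X → b ∈ X)
    -- `X` is closed under finite direct sums
    (hSum : ∀ (a b : C), a ∈ X → b ∈ X → (a ⊞ b) ∈ X)
    -- `X` is closed under direct summands
    (hSummand : ∀ (a b : C), b ∈ X → ∀ (s : a ⟶ b) (r : b ⟶ a), s ≫ r = 𝟙 a → a ∈ X)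
    -- every object of `C` admits an `X`-cover
    (hCovering : ∀ c : C, ∃ (x : C) (ξ : x ⟶ c), x ∈ X ∧
      (∀ (x' : C), x' ∈ X → ∀ f : x' ⟶ c, ∃ g : x' ⟶ x, g ≫ ξ = f) ∧
      (∀ g : x ⟶ x, g ≫ ξ = ξ → IsIso g))
    -- `X` is left closed under extensions
    (hExt : ∀ (x' x'' : C), x' ∈ X → x'' ∈ X → ∀ (δ : x'' ⟶ x'⟦(1 : ℤ)⟧),
      ∃ (e : C) (f : x' ⟶ e) (g : e ⟶ x''),
        e ∈ X ∧ Triangle.mk f g δ ∈ distTriang C) :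
    ∀ c : C, ∃ (x y : C) (ξ : x ⟶ c) (γ : c ⟶ y) (φ : y ⟶ x⟦(1 : ℤ)⟧),
      x ∈ X ∧ (Triangle.mk ξ γ φ ∈ distTriang C) ∧
      ∀ (x' : C), x' ∈ X → ∀ f : x' ⟶ y, f = 0 := by
  intro c
  obtain ⟨x, ξ, hx, hξ, hmin⟩ := hCovering c
  obtain ⟨y, γ, φ, hT⟩ := distinguished_cocone_triangle ξ
  refine ⟨x, y, ξ, γ, φ, hx, hT, fun x' hx' f => ?_⟩
  exact eq_zero_of_isPrecover_of_comp_mor₃_eq_zero hT hξ hx' f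
    (comp_mor₃_eq_zero_of_isPrecover_of_isRightMinimal hT hξ hmin f (hExt x x' hx hx' _))
end

section
/- (Abstract t-structure form of the paper's octahedron lemma identifying f with τ^{≥0}e.) Let D be a triangulated category with suspension Σ and a t-structure (D^{≤0}, D^{≥0}) with heart H = D^{≤0} ∩ D^{≥0}, and let n ≥ 1 be an integer. Let u', u'', m'' be objects of H, and suppose given a distinguished triangle Σ^{-n}u'' ⊕ m'' →(φ'', μ'') u' → e → Σ(Σ^{-n}u'' ⊕ m''), whose first map has components φ'' : Σ^{-n}u'' → u' and μ'' : m'' → u'. Let μ' : u' → b' be a morphism in H that is a cokernel of μ'' in the heart H. Then for every distinguished triangle Σ^{-n}u'' →μ'∘φ'' b' → f → Σ^{1-n}u'', the object f is isomorphic to τ^{≥0}e. -/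
/-!
Since `μ'' ≫ μ' = 0`, TR3 extends `(biprod.fst, μ')` to a morphism of triangles, whose third
component is a map `h : e ⟶ f`. For `Y ∈ D^{≥0}`, a four-lemma chase in the long exact sequences
of `Hom(-, Y)` shows that precomposition with `h` is bijective: `Hom(m''⟦1⟧, Y)` and
`Hom(u'⟦1⟧, Y)` vanish, and the cokernel property of `μ'`, which extends from the heart to all of
`D^{≥0}` by passing to `τ^{≤0}Y`, identifies `Hom(b', Y)` with the maps `u' ⟶ Y` killed by `μ''`.
As `n ≥ 1`, `f` lies in `D^{≥0}`, so `h` and `η : e ⟶ τ^{≥0}e` solve the same universal problem.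
-/

open CategoryTheory Limits Pretriangulated Triangulated

namespace CategoryTheory

lemma nonempty_iso_of_bijective_precomp {C : Type*} [Category C] (P : ObjectProperty C)
    {X Y₁ Y₂ : C} {f₁ : X ⟶ Y₁} {f₂ : X ⟶ Y₂} (hY₁ : P Y₁) (hY₂ : P Y₂)
    (hf₁ : ∀ Z, P Z → Function.Bijective (f₁ ≫ · : (Y₁ ⟶ Z) → _))
    (hf₂ : ∀ Z, P Z → Function.Bijective (f₂ ≫ · : (Y₂ ⟶ Z) → _)) :
    Nonempty (Y₁ ≅ Y₂) := by
  obtain ⟨a, ha⟩ := (hf₁ Y₂ hY₂).2 f₂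
  obtain ⟨b, hb⟩ := (hf₂ Y₁ hY₁).2 f₁
  dsimp only at ha hb
  exact ⟨⟨a, b, (hf₁ Y₁ hY₁).1 (by simp [reassoc_of% ha, hb]),
    (hf₂ Y₂ hY₂).1 (by simp [reassoc_of% hb, ha])⟩⟩

namespace Preadditive

variable {C : Type*} [Category C] [Preadditive C]

lemma injective_precomp_iff {X Y : C} (f : X ⟶ Y) (Z : C) :
    Function.Injective (f ≫ · : (Y ⟶ Z) → _) ↔ ∀ g : Y ⟶ Z, f ≫ g = 0 → g = 0 :=
  injective_iff_map_eq_zero (leftComp Z f)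

lemma injective_postcomp_iff {Y Z : C} (f : Y ⟶ Z) (X : C) :
    Function.Injective (· ≫ f : (X ⟶ Y) → _) ↔ ∀ g : X ⟶ Y, g ≫ f = 0 → g = 0 :=
  injective_iff_map_eq_zero (rightComp X f)

end Preadditive

lemma Functor.map_fst_comp_map_inl_comp {C D : Type*} [Category C] [Preadditive C]
    [Category D] [Preadditive D] (F : C ⥤ D) [F.Additive]
    {A B : C} [HasBinaryBiproduct A B] {Y : D} (d : F.obj (A ⊞ B) ⟶ Y)
    (hd : F.map biprod.inr ≫ d = 0) :
    F.map biprod.fst ≫ F.map biprod.inl ≫ d = d := by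
  rw [← Category.assoc, ← F.map_comp, eq_sub_of_add_eq biprod.total, F.map_sub, F.map_id,
    Preadditive.sub_comp, F.map_comp, Category.assoc, hd, comp_zero, Category.id_comp, sub_zero]

end CategoryTheory

namespace CategoryTheory.Pretriangulated

variable {C : Type*} [Category C] [Preadditive C] [HasZeroObject C] [HasShift C ℤ]
  [∀ n : ℤ, (shiftFunctor C n).Additive] [Pretriangulated C]
  {T₁ T₂ : Triangle C} (hT₁ : T₁ ∈ distTriang C) (hT₂ : T₂ ∈ distTriang C) (φ : T₁ ⟶ T₂) (Y : C)

include hT₁ hT₂ in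
lemma injective_precomp_hom₃
    (h₂ : Function.Injective (φ.hom₂ ≫ · : (T₂.obj₂ ⟶ Y) → _))
    (h₁' : Function.Injective (φ.hom₁⟦1⟧' ≫ · : (T₂.obj₁⟦(1 : ℤ)⟧ ⟶ Y) → _))
    (h₂' : Function.Surjective (φ.hom₂⟦1⟧' ≫ · : (T₂.obj₂⟦(1 : ℤ)⟧ ⟶ Y) → _)) :
    Function.Injective (φ.hom₃ ≫ · : (T₂.obj₃ ⟶ Y) → _) := by
  rw [Preadditive.injective_precomp_iff] at h₂ ⊢
  intro g hg
  obtain ⟨g', rfl⟩ := T₂.yoneda_exact₃ hT₂ g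
    (h₂ _ (by rw [← Category.assoc, ← φ.comm₂, Category.assoc, hg, comp_zero]))
  obtain ⟨x, hx⟩ := T₁.rotate.yoneda_exact₃ (rot_of_distTriang _ hT₁) _
    ((φ.comm₃_assoc g').trans hg)
  replace hx : φ.hom₁⟦1⟧' ≫ g' = -(T₁.mor₁⟦1⟧' ≫ x) := hx.trans (Preadditive.neg_comp _ _)
  obtain ⟨x', rfl⟩ := h₂' x
  have : g' = -(T₂.mor₁⟦1⟧' ≫ x') := h₁' (by
    dsimp only at hx ⊢
    rw [hx, Preadditive.comp_neg, ← Functor.map_comp_assoc, φ.comm₁,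
      Functor.map_comp_assoc])
  rw [this, Preadditive.comp_neg, comp_distTriang_mor_zero₃₁_assoc _ hT₂, zero_comp, neg_zero]

include hT₁ hT₂ in
lemma surjective_precomp_hom₃
    (h₁ : Function.Injective (φ.hom₁ ≫ · : (T₂.obj₁ ⟶ Y) → _))
    (h₂ : ∀ g : T₁.obj₂ ⟶ Y, T₁.mor₁ ≫ g = 0 → ∃ g', φ.hom₂ ≫ g' = g)
    (h₁' : Function.Surjective (φ.hom₁⟦1⟧' ≫ · : (T₂.obj₁⟦(1 : ℤ)⟧ ⟶ Y) → _)) :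
    Function.Surjective (φ.hom₃ ≫ · : (T₂.obj₃ ⟶ Y) → _) := by
  rw [Preadditive.injective_precomp_iff] at h₁
  intro q
  obtain ⟨b, hb⟩ := h₂ (T₁.mor₂ ≫ q) (by rw [comp_distTriang_mor_zero₁₂_assoc _ hT₁, zero_comp])
  obtain ⟨q₀, rfl⟩ := T₂.yoneda_exact₂ hT₂ b (h₁ _ (by
    rw [← Category.assoc, ← φ.comm₁, Category.assoc, hb,
      comp_distTriang_mor_zero₁₂_assoc _ hT₁, zero_comp]))
  obtain ⟨d, hd⟩ := T₁.yoneda_exact₃ hT₁ (φ.hom₃ ≫ q₀ - q)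
    (by rw [Preadditive.comp_sub, ← Category.assoc, φ.comm₂, Category.assoc, hb, sub_self])
  obtain ⟨d', rfl⟩ := h₁' d
  refine ⟨q₀ - T₂.mor₃ ≫ d', ?_⟩
  dsimp only at hd ⊢
  rw [Preadditive.comp_sub, ← Category.assoc, ← φ.comm₃, Category.assoc, ← hd, sub_sub_cancel]

end CategoryTheory.Pretriangulated

namespace CategoryTheory.Triangulated.TStructure

variable {C : Type*} [Category C] [Preadditive C] [HasZeroObject C] [HasShift C ℤ]
  [∀ n : ℤ, (shiftFunctor C n).Additive] [Pretriangulated C] (t : TStructure C)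

lemma bijective_precomp_mor₂ (T : Triangle C) (hT : T ∈ distTriang C) (n₀ n₁ : ℤ)
    (h : n₀ < n₁) (h₁ : t.IsLE T.obj₁ n₀) (Y : C) [t.IsGE Y n₁] :
    Function.Bijective (T.mor₂ ≫ · : (T.obj₃ ⟶ Y) → _) := by
  refine ⟨(Preadditive.injective_precomp_iff _ _).2 fun g hg ↦ ?_, fun g ↦ ?_⟩
  · obtain ⟨g', rfl⟩ := T.yoneda_exact₃ hT g hg
    have := t.isLE_shift T.obj₁ n₀ 1 (n₀ - 1)
    rw [t.zero g' (n₀ - 1) n₁, comp_zero]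
  · obtain ⟨g', hg'⟩ := T.yoneda_exact₂ hT g (t.zero _ n₀ n₁)
    exact ⟨g', hg'.symm⟩

lemma bijective_postcomp_mor₁ (T : Triangle C) (hT : T ∈ distTriang C) (n₀ n₁ : ℤ)
    (h : n₀ < n₁) (h₃ : t.IsGE T.obj₃ n₁) (X : C) [t.IsLE X n₀] :
    Function.Bijective (· ≫ T.mor₁ : (X ⟶ T.obj₁) → _) := by
  refine ⟨(Preadditive.injective_postcomp_iff _ _).2 fun g hg ↦ ?_, fun g ↦ ?_⟩
  · obtain ⟨g', rfl⟩ := T.invRotate.coyoneda_exact₂ (inv_rot_of_distTriang _ hT) g hg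
    rw [t.zero_of_isLE_of_isGE g' n₀ (n₁ + 1) (by lia) inferInstance
      (t.isGE_shift T.obj₃ n₁ (-1) (n₁ + 1))]
    exact zero_comp
  · obtain ⟨g', hg'⟩ := T.coyoneda_exact₂ hT g (t.zero _ n₀ n₁)
    exact ⟨g', hg'.symm⟩

lemma existsUnique_desc_of_isGE {m u b : C} {μ'' : m ⟶ u} {μ' : u ⟶ b}
    [t.IsLE m 0] [t.IsLE u 0] [t.IsLE b 0]
    (hcoker : ∀ z, t.heart z → ∀ g : u ⟶ z, μ'' ≫ g = 0 → ∃! h : b ⟶ z, μ' ≫ h = g)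
    (Y : C) [t.IsGE Y 0] (g : u ⟶ Y) (hg : μ'' ≫ g = 0) : ∃! h : b ⟶ Y, μ' ≫ h = g := by
  obtain ⟨Y₀, Y₁, hY₀, hY₁, ι, π, δ, hT⟩ := t.exists_triangle Y 0 1 (by lia)
  have : t.IsLE Y₀ 0 := ⟨hY₀⟩
  have : t.IsGE Y₁ 1 := ⟨hY₁⟩
  have : t.IsGE (Y₁⟦(-1 : ℤ)⟧) 2 := t.isGE_shift Y₁ 1 (-1) 2
  have : t.IsGE Y₀ 0 :=
    t.isGE₂ _ (inv_rot_of_distTriang _ hT) 0 (t.isGE_of_ge (Y₁⟦(-1 : ℤ)⟧) 0 2) ‹_›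
  have lift (X : C) [t.IsLE X 0] : Function.Bijective (· ≫ ι : (X ⟶ Y₀) → _) :=
    t.bijective_postcomp_mor₁ _ hT 0 1 (by lia) ‹_› X
  obtain ⟨g₀, rfl⟩ := (lift u).2 g
  obtain ⟨h₀, hh₀, huniq⟩ := hcoker Y₀ ((t.mem_heart_iff Y₀).2 ⟨‹_›, ‹_›⟩) g₀
    ((lift m).1 (by simpa using hg))
  refine ⟨h₀ ≫ ι, by simp [← hh₀], fun h hh ↦ ?_⟩
  obtain ⟨h', rfl⟩ := (lift b).2 h
  rw [huniq h' ((lift u).1 (by simpa using hh))]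

end CategoryTheory.Triangulated.TStructure

/-- Abstract t-structure form of the octahedron lemma identifying `f` with
`τ^{≥0} e`: given heart objects `u'`, `u''`, `m''`, a distinguished triangle
`Σ^{-n}u'' ⊕ m'' ⟶(φ'', μ'') u' ⟶ e ⟶ Σ(Σ^{-n}u'' ⊕ m'')`, and a morphism
`μ' : u' ⟶ b'` which is a cokernel of `μ''` in the heart, every distinguished
triangle `Σ^{-n}u'' ⟶μ'∘φ'' b' ⟶ f ⟶ Σ^{1-n}u''` has `f ≅ τ^{≥0} e`. -/
theorem third_object_iso_truncation
    {D : Type*} [Category D] [Preadditive D] [HasZeroObject D] [HasShift D ℤ]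
    [∀ n : ℤ, (shiftFunctor D n).Additive] [Pretriangulated D] [IsTriangulated D]
    [HasBinaryBiproducts D]
    (t : TStructure D)
    (n : ℕ) (hn : 1 ≤ n)
    (u' u'' m'' : D)
    -- `u'`, `u''`, `m''` are objects of the heart `H = D^{≤0} ∩ D^{≥0}`
    (hu' : t.le 0 u' ∧ t.ge 0 u') (hu'' : t.le 0 u'' ∧ t.ge 0 u'')
    (hm'' : t.le 0 m'' ∧ t.ge 0 m'')
    -- the given distinguished triangle `Σ^{-n}u'' ⊕ m'' ⟶ u' ⟶ e ⟶ Σ(Σ^{-n}u'' ⊕ m'')`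
    (φ'' : (u''⟦(-(n : ℤ))⟧) ⟶ u') (μ'' : m'' ⟶ u')
    (e : D) (ε : u' ⟶ e) (δ : e ⟶ ((u''⟦(-(n : ℤ))⟧) ⊞ m'')⟦(1 : ℤ)⟧)
    (hTe : Triangle.mk (biprod.desc φ'' μ'') ε δ ∈ distTriang D)
    -- `μ' : u' ⟶ b'` is a cokernel of `μ''` computed in the heart
    (b' : D) (hb' : t.le 0 b' ∧ t.ge 0 b') (μ' : u' ⟶ b')
    (hcomp : μ'' ≫ μ' = 0)
    (hcoker : ∀ (z : D), (t.le 0 z ∧ t.ge 0 z) → ∀ (g : u' ⟶ z), μ'' ≫ g = 0 →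
      ∃! h : b' ⟶ z, μ' ≫ h = g)
    -- a truncation triangle for `e`: `τ^{≤-1}e = e₁`, `τ^{≥0}e = e₀`
    (e₁ e₀ : D) (α : e₁ ⟶ e) (η : e ⟶ e₀) (β : e₀ ⟶ e₁⟦(1 : ℤ)⟧)
    (he₁ : t.le (-1) e₁) (he₀ : t.ge 0 e₀)
    (hTtrunc : Triangle.mk α η β ∈ distTriang D)
    -- any distinguished triangle `Σ^{-n}u'' ⟶μ'∘φ'' b' ⟶ f ⟶ Σ^{1-n}u''`
    (f : D) (γ : b' ⟶ f) (ω : f ⟶ ((u''⟦(-(n : ℤ))⟧)⟦(1 : ℤ)⟧))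
    (hTf : Triangle.mk (φ'' ≫ μ') γ ω ∈ distTriang D) :
    Nonempty (f ≅ e₀) := by
  have : t.IsLE u' 0 := ⟨hu'.1⟩
  have : t.IsGE u'' 0 := ⟨hu''.2⟩
  have : t.IsLE m'' 0 := ⟨hm''.1⟩
  have : t.IsLE b' 0 := ⟨hb'.1⟩
  have : t.IsGE b' 0 := ⟨hb'.2⟩
  have comm₁ : biprod.desc φ'' μ'' ≫ μ' = biprod.fst ≫ φ'' ≫ μ' := by ext <;> simp [hcomp]
  obtain ⟨h, comm₂, comm₃⟩ := complete_distinguished_triangle_morphism _ _ hTe hTf _ _ comm₁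
  let φ := Triangle.homMk _ _ biprod.fst μ' h comm₁ comm₂ comm₃
  have hf : t.IsGE f 0 := by
    have := t.isGE_shift u'' 0 (-n) n
    have := t.isGE_shift (u''⟦-(n : ℤ)⟧) n 1 (n - 1)
    have := t.isGE_of_ge (u''⟦-(n : ℤ)⟧⟦(1 : ℤ)⟧) 0 (n - 1)
    exact t.isGE₂ _ (rot_of_distTriang _ hTf) 0 ‹_› ‹_›
  refine nonempty_iso_of_bijective_precomp (t.ge 0) (f₁ := h) (f₂ := η) hf.ge he₀
    (fun Y hY ↦ ?_) (fun Y hY ↦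
      have : t.IsGE Y 0 := ⟨hY⟩
      t.bijective_precomp_mor₂ _ hTtrunc (-1) 0 (by lia) ⟨he₁⟩ Y)
  have : t.IsGE Y 0 := ⟨hY⟩
  have desc := t.existsUnique_desc_of_isGE hcoker Y
  refine ⟨injective_precomp_hom₃ hTe hTf φ Y ?_ ?_ ?_, surjective_precomp_hom₃ hTe hTf φ Y ?_ ?_ ?_⟩
  · exact (Preadditive.injective_precomp_iff μ' Y).2 fun c hc ↦
      (desc 0 (by simp)).unique hc (by simp)
  · exact (epi_iff_forall_injective (biprod.fst⟦(1 : ℤ)⟧' : _ ⟶ u''⟦-(n : ℤ)⟧⟦(1 : ℤ)⟧)).1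
      inferInstance Y
  · have := t.isLE_shift u' 0 1 (-1)
    exact fun (g : u'⟦(1 : ℤ)⟧ ⟶ Y) ↦ ⟨0, comp_zero.trans (t.zero g (-1) 0).symm⟩
  · exact (epi_iff_forall_injective (biprod.fst : _ ⟶ u''⟦-(n : ℤ)⟧)).1 inferInstance Y
  · exact fun (g : u' ⟶ Y) (hg : biprod.desc φ'' μ'' ≫ g = 0) ↦
      (desc g (by simpa using biprod.inr ≫= hg)).exists
  · have := t.isLE_shift m'' 0 1 (-1)
    exact fun d ↦ ⟨_, (shiftFunctor D 1).map_fst_comp_map_inl_comp d (t.zero _ (-1) 0)⟩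
end

section
/- (Module-level form of the paper's vanishing lemma.) Let R be a ring, n ≥ 2 an integer, and let 0 → u →θ m →ψ₀ v₁ →ψ₁ v₂ → ⋯ →ψ_{n-1} v_n → 0 be an exact sequence of R-modules. Let ũ be an R-module such that: (a) the induced complex 0 → Hom_R(ũ, v₁) → Hom_R(ũ, v₂) → ⋯ → Hom_R(ũ, v_n) → 0 is exact, and (b) Ext^i_R(ũ, v_j) = 0 for all 1 ≤ i ≤ n-1 and all 1 ≤ j ≤ n-1. Then Hom_R(ũ, Coker θ) = 0 and Ext^{n-1}_R(ũ, Coker θ) = 0. -/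
/-!
Splice `0 → Coker θ → v₁ → ⋯ → v_n → 0` into short exact sequences
`0 → K_j → v_j → K_{j+1} → 0`, where `K_j = ker ψ_j`, `K_n = v_n` and `K_1 ≅ Coker θ`.
Since `Hom(w, v_{n-1}) → Hom(w, v_n)` is onto and `Ext¹(w, v_{n-1}) = 0`, the long exact
sequence of `Ext(w, -)` gives `Ext¹(w, K_{n-1}) = 0`; dimension shifting along the vanishing
groups `Ext^i(w, v_j)` then yields `Ext^i(w, K_j) = 0` whenever `i + j = n`, in particular
`Ext^{n-1}(w, K_1) = 0`. For `Hom`: `K_1 ⊆ v₁` is killed by `ψ₁`, while composition with `ψ₁`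
is injective on `Hom(w, v₁)`.
-/

open CategoryTheory Limits

universe w v u

namespace ChainComplex

variable {C : Type u} [Category.{v} C] [Abelian C] (A : Type w) [Ring A] [Linear A C]

noncomputable def linearYonedaMap (X : ChainComplex C ℕ) {Y Z : C} (f : Y ⟶ Z) :
    X.linearYonedaObj A Y ⟶ X.linearYonedaObj A Z where
  f i := ((linearYoneda A C).map f).app (Opposite.op (X.X i))
  comm' i j _ := (((linearYoneda A C).map f).naturality (X.d j i).op).symm

noncomputable def linearYonedaShortComplex (X : ChainComplex C ℕ) (S : ShortComplex C) :
    ShortComplex (CochainComplex (ModuleCat.{v} A) ℕ) :=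
  ShortComplex.mk (X.linearYonedaMap A S.f) (X.linearYonedaMap A S.g) (by
    ext i (g : X.X i ⟶ S.X₁)
    change (g ≫ S.f) ≫ S.g = 0
    simp)

variable {A}

lemma shortExact_linearYonedaShortComplex (X : ChainComplex C ℕ) [∀ i, Projective (X.X i)]
    {S : ShortComplex C} (hS : S.ShortExact) : (X.linearYonedaShortComplex A S).ShortExact := by
  have := hS.mono_f
  refine HomologicalComplex.shortExact_of_degreewise_shortExact _ fun i ↦
    ShortComplex.ShortExact.mk' ?_ ?_ ?_
  · rw [ShortComplex.moduleCat_exact_iff]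
    intro (g : X.X i ⟶ S.X₂) (hg : g ≫ S.g = 0)
    exact ⟨hS.exact.lift g hg, hS.exact.lift_f g hg⟩
  · rw [ModuleCat.mono_iff_injective]
    intro (g₁ : X.X i ⟶ S.X₁) (g₂ : X.X i ⟶ S.X₁) (h : g₁ ≫ S.f = g₂ ≫ S.f)
    exact (cancel_mono S.f).1 h
  · have := hS.epi_g
    rw [ModuleCat.epi_iff_surjective]
    intro (g : X.X i ⟶ S.X₃)
    exact ⟨Projective.factorThru g S.g, Projective.factorThru_comp g S.g⟩

end ChainComplex

section Abelian

variable {C : Type u} [Category.{v} C] [Abelian C] {A : Type w} [Ring A] [Linear A C]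

/-- A `0`-cocycle `P₀ ⟶ Z` of `Hom(P, Z)` kills `P₁ ⟶ P₀`, hence factors through `P₀ ⟶ X`;
lifting that factorization along `f` gives a preimage cocycle. -/
lemma CategoryTheory.ProjectiveResolution.epi_homologyMap_zero_linearYonedaMap {X : C}
    (P : ProjectiveResolution X) {Y Z : C} {f : Y ⟶ Z}
    (hf : ∀ φ : X ⟶ Z, ∃ φ' : X ⟶ Y, φ' ≫ f = φ) :
    Epi (HomologicalComplex.homologyMap (P.complex.linearYonedaMap A f) 0) := by
  let K := P.complex.linearYonedaObj A Y
  let L := P.complex.linearYonedaObj A Z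
  suffices Epi (HomologicalComplex.cyclesMap (P.complex.linearYonedaMap A f) 0) from
    epi_of_epi_fac (HomologicalComplex.homologyπ_naturality _ 0)
  rw [ModuleCat.epi_iff_surjective]
  intro y
  let φ : P.complex.X 0 ⟶ Z := L.iCycles 0 y
  have hφ : P.complex.d 1 0 ≫ φ = 0 := congr($(L.iCycles_d 0 1) y)
  obtain ⟨ψ, hψ⟩ := hf (P.isColimitCokernelCofork.desc (CokernelCofork.ofπ φ hφ))
  have hd : P.complex.d 1 0 ≫ P.π.f 0 ≫ ψ = 0 :=
    (P.complex_d_comp_π_f_zero_assoc ψ).trans zero_comp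
  let x := K.cyclesMk (P.π.f 0 ≫ ψ) 1 (by simp) hd
  have hx : K.iCycles 0 x = P.π.f 0 ≫ ψ := K.i_cyclesMk _ 1 (by simp) hd
  refine ⟨x, (ModuleCat.mono_iff_injective (L.iCycles 0)).1 inferInstance ?_⟩
  rw [← ConcreteCategory.comp_apply, HomologicalComplex.cyclesMap_i, ConcreteCategory.comp_apply]
  change (K.iCycles 0 x : P.complex.X 0 ⟶ Y) ≫ f = φ
  rw [hx]
  exact (Category.assoc _ _ _).trans
    ((congrArg (P.π.f 0 ≫ ·) hψ).trans (Cofork.IsColimit.π_desc P.isColimitCokernelCofork))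

variable [EnoughProjectives C]

lemma isZero_Ext_succ_of_shortExact (X : C) {S : ShortComplex C} (hS : S.ShortExact) (i : ℕ)
    (h₃ : IsZero (((Ext A C i).obj (Opposite.op X)).obj S.X₃))
    (h₂ : IsZero (((Ext A C (i + 1)).obj (Opposite.op X)).obj S.X₂)) :
    IsZero (((Ext A C (i + 1)).obj (Opposite.op X)).obj S.X₁) := by
  let P := projectiveResolution X
  have hex := (P.complex.shortExact_linearYonedaShortComplex (A := A) hS).homology_exact₁ i
    (i + 1) rfl
  refine (hex.isZero_X₂ ?_ ?_).of_iso (P.isoExt (i + 1) S.X₁)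
  · exact (h₃.of_iso (P.isoExt i S.X₃).symm).eq_of_src _ _
  · exact (h₂.of_iso (P.isoExt (i + 1) S.X₂).symm).eq_of_tgt _ _

lemma isZero_Ext_one_of_shortExact (X : C) {S : ShortComplex C} (hS : S.ShortExact)
    (hg : ∀ φ : X ⟶ S.X₃, ∃ φ' : X ⟶ S.X₂, φ' ≫ S.g = φ)
    (h₂ : IsZero (((Ext A C 1).obj (Opposite.op X)).obj S.X₂)) :
    IsZero (((Ext A C 1).obj (Opposite.op X)).obj S.X₁) := by
  let P := projectiveResolution X
  have hS' := P.complex.shortExact_linearYonedaShortComplex (A := A) hS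
  have : Epi (HomologicalComplex.homologyMap (P.complex.linearYonedaShortComplex A S).g 0) :=
    P.epi_homologyMap_zero_linearYonedaMap hg
  have hδ : hS'.δ 0 1 rfl = 0 := zero_of_epi_comp _ (hS'.comp_δ 0 1 rfl)
  refine ((hS'.homology_exact₁ 0 1 rfl).isZero_X₂ hδ ?_).of_iso (P.isoExt 1 S.X₁)
  exact (h₂.of_iso (P.isoExt 1 S.X₂).symm).eq_of_tgt _ _

end Abelian

section Module

variable {R : Type u} [Ring R] {W M N L : Type v} [AddCommGroup W] [Module R W]
  [AddCommGroup M] [Module R M] [AddCommGroup N] [Module R N] [AddCommGroup L] [Module R L]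

lemma Function.Exact.codRestrict_surjective {f : M →ₗ[R] N} {g : N →ₗ[R] L}
    (h : Function.Exact f g) :
    Function.Surjective (f.codRestrict (LinearMap.ker g) h.apply_apply_eq_zero) := by
  rintro ⟨y, hy⟩
  obtain ⟨x, rfl⟩ := (h y).1 hy
  exact ⟨x, rfl⟩

lemma LinearMap.subsingleton_of_injective_comp (g : N →ₗ[R] L)
    (hg : Function.Injective (fun f : W →ₗ[R] N => g ∘ₗ f)) :
    Subsingleton (W →ₗ[R] LinearMap.ker g) := by
  refine ⟨fun f₁ f₂ => ?_⟩
  have h : (LinearMap.ker g).subtype ∘ₗ f₁ = (LinearMap.ker g).subtype ∘ₗ f₂ :=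
    hg (by ext x; simp)
  ext x
  exact LinearMap.congr_fun h x

variable [Small.{v} R]

lemma isZero_Ext_succ_ker_of_exact {f : M →ₗ[R] N} {g : N →ₗ[R] L} (hfg : Function.Exact f g)
    (i : ℕ)
    (h₃ : IsZero (((Ext ℤ (ModuleCat.{v} R) i).obj (Opposite.op (ModuleCat.of R W))).obj
      (ModuleCat.of R (LinearMap.ker g))))
    (h₂ : IsZero (((Ext ℤ (ModuleCat.{v} R) (i + 1)).obj (Opposite.op (ModuleCat.of R W))).obj
      (ModuleCat.of R M))) :
    IsZero (((Ext ℤ (ModuleCat.{v} R) (i + 1)).obj (Opposite.op (ModuleCat.of R W))).obj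
      (ModuleCat.of R (LinearMap.ker f))) :=
  (isZero_Ext_succ_of_shortExact _ (LinearMap.shortExact_shortComplexKer
    hfg.codRestrict_surjective) i h₃ h₂).of_iso
    (((Ext ℤ (ModuleCat.{v} R) (i + 1)).obj (Opposite.op (ModuleCat.of R W))).mapIso
      (LinearEquiv.ofEq _ _ (LinearMap.ker_codRestrict _ _ _)).symm.toModuleIso)

lemma isZero_Ext_one_ker_of_surjective (g : N →ₗ[R] L) (hg : Function.Surjective g)
    (hW : Function.Surjective (fun f : W →ₗ[R] N => g ∘ₗ f))
    (h₂ : IsZero (((Ext ℤ (ModuleCat.{v} R) 1).obj (Opposite.op (ModuleCat.of R W))).obj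
      (ModuleCat.of R N))) :
    IsZero (((Ext ℤ (ModuleCat.{v} R) 1).obj (Opposite.op (ModuleCat.of R W))).obj
      (ModuleCat.of R (LinearMap.ker g))) := by
  refine isZero_Ext_one_of_shortExact _ (LinearMap.shortExact_shortComplexKer hg)
    (fun φ => ?_) h₂
  obtain ⟨f, hf⟩ := hW φ.hom
  exact ⟨ModuleCat.ofHom f, ModuleCat.hom_ext hf⟩

theorem isZero_Ext_ker_of_exact (n : ℕ) (v : ℕ → Type v) [∀ j, AddCommGroup (v j)]
    [∀ j, Module R (v j)] (ψ : ∀ j, v j →ₗ[R] v (j + 1))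
    (hψ : ∀ j, 1 ≤ j → j ≤ n - 2 → Function.Exact (ψ j) (ψ (j + 1)))
    (hsurj : Function.Surjective (ψ (n - 1)))
    (hW : Function.Surjective (fun f : W →ₗ[R] v (n - 1) => (ψ (n - 1)) ∘ₗ f))
    (hb : ∀ i j : ℕ, 1 ≤ i → i ≤ n - 1 → 1 ≤ j → j ≤ n - 1 →
      IsZero (((Ext ℤ (ModuleCat.{v} R) i).obj (Opposite.op (ModuleCat.of R W))).obj
        (ModuleCat.of R (v j)))) :
    ∀ i, 1 ≤ i → ∀ j, 1 ≤ j → i + j = n →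
      IsZero (((Ext ℤ (ModuleCat.{v} R) i).obj (Opposite.op (ModuleCat.of R W))).obj
        (ModuleCat.of R (LinearMap.ker (ψ j)))) := by
  intro i hi
  induction i, hi using Nat.le_induction with
  | base =>
    intro j hj hjn
    obtain rfl : j = n - 1 := by omega
    exact isZero_Ext_one_ker_of_surjective _ hsurj hW (hb 1 (n - 1) le_rfl hj hj le_rfl)
  | succ i hi ih =>
    intro j hj hjn
    exact isZero_Ext_succ_ker_of_exact (hψ j hj (by omega)) i
      (ih (j + 1) (by omega) (by omega)) (hb (i + 1) j (by omega) (by omega) hj (by omega))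

end Module

theorem vanishing_lemma_general
    (R : Type) [Ring R] (n : ℕ) (hn : 2 ≤ n)
    (u m : Type) [AddCommGroup u] [Module R u] [AddCommGroup m] [Module R m]
    (v : ℕ → Type) [∀ j, AddCommGroup (v j)] [∀ j, Module R (v j)]
    (θ : u →ₗ[R] m) (π : m →ₗ[R] v 1) (ψ : ∀ j, v j →ₗ[R] v (j + 1))
    -- exactness of `0 → u → m → v₁ → ⋯ → v_n → 0`
    (hθπ : Function.Exact θ π)
    (hπψ : Function.Exact π (ψ 1))
    (hψ : ∀ j, 1 ≤ j → j ≤ n - 2 → Function.Exact (ψ j) (ψ (j + 1)))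
    (hsurj : Function.Surjective (ψ (n - 1)))
    (w : Type) [AddCommGroup w] [Module R w]
    -- (a) the induced complex `0 → Hom(w, v₁) → ⋯ → Hom(w, v_n) → 0` is exact
    (ha₁ : Function.Injective (fun f : w →ₗ[R] v 1 => (ψ 1) ∘ₗ f))
    (ha₃ : Function.Surjective (fun f : w →ₗ[R] v (n - 1) => (ψ (n - 1)) ∘ₗ f))
    -- (b) `Ext^i(w, v_j) = 0` for `1 ≤ i ≤ n-1` and `1 ≤ j ≤ n-1`
    (hb : ∀ i j : ℕ, 1 ≤ i → i ≤ n - 1 → 1 ≤ j → j ≤ n - 1 →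
      Limits.IsZero (((Ext ℤ (ModuleCat.{0} R) i).obj
        (Opposite.op (ModuleCat.of R w))).obj (ModuleCat.of R (v j)))) :
    (∀ f : w →ₗ[R] (m ⧸ LinearMap.range θ), f = 0) ∧
    Limits.IsZero (((Ext ℤ (ModuleCat.{0} R) (n - 1)).obj
      (Opposite.op (ModuleCat.of R w))).obj
        (ModuleCat.of R (m ⧸ LinearMap.range θ))) := by
  have hθπ' : Function.Exact θ (π.codRestrict (LinearMap.ker (ψ 1)) hπψ.apply_apply_eq_zero) :=
    LinearMap.exact_iff.2 ((LinearMap.ker_codRestrict _ _ _).trans hθπ.linearMap_ker_eq)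
  let e := hθπ'.linearEquivOfSurjective hπψ.codRestrict_surjective
  refine ⟨fun f => ?_, ?_⟩
  · have := LinearMap.subsingleton_of_injective_comp (ψ 1) ha₁
    have he : Function.Injective fun g : w →ₗ[R] m ⧸ LinearMap.range θ => e.toLinearMap ∘ₗ g :=
      fun g₁ g₂ h => LinearMap.ext fun x => e.injective (LinearMap.congr_fun h x)
    exact he (Subsingleton.elim _ _)
  · exact (isZero_Ext_ker_of_exact n v ψ hψ hsurj ha₃ hb (n - 1) (by omega) 1 le_rfl
      (by omega)).of_iso (((Ext ℤ (ModuleCat.{0} R) (n - 1)).obj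
        (Opposite.op (ModuleCat.of R w))).mapIso e.toModuleIso)

/-- Module-level form of the vanishing lemma: given an exact sequence
`0 → u →θ m →π v₁ →ψ₁ v₂ → ⋯ →ψ_{n-1} v_n → 0` of `R`-modules and a module `w`
such that the induced complex `0 → Hom(w,v₁) → ⋯ → Hom(w,v_n) → 0` is exact and
`Ext^i(w, v_j) = 0` for `1 ≤ i ≤ n-1`, `1 ≤ j ≤ n-1`, one has
`Hom(w, Coker θ) = 0` and `Ext^{n-1}(w, Coker θ) = 0`. -/
theorem vanishing_lemma
    (R : Type) [Ring R] (n : ℕ) (hn : 2 ≤ n)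
    (u m : Type) [AddCommGroup u] [Module R u] [AddCommGroup m] [Module R m]
    (v : ℕ → Type) [∀ j, AddCommGroup (v j)] [∀ j, Module R (v j)]
    (θ : u →ₗ[R] m) (π : m →ₗ[R] v 1) (ψ : ∀ j, v j →ₗ[R] v (j + 1))
    -- exactness of `0 → u → m → v₁ → ⋯ → v_n → 0`
    (hθ : Function.Injective θ)
    (hθπ : Function.Exact θ π)
    (hπψ : Function.Exact π (ψ 1))
    (hψ : ∀ j, 1 ≤ j → j ≤ n - 2 → Function.Exact (ψ j) (ψ (j + 1)))
    (hsurj : Function.Surjective (ψ (n - 1)))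
    (w : Type) [AddCommGroup w] [Module R w]
    -- (a) the induced complex `0 → Hom(w, v₁) → ⋯ → Hom(w, v_n) → 0` is exact
    (ha₁ : Function.Injective (fun f : w →ₗ[R] v 1 => (ψ 1) ∘ₗ f))
    (ha₂ : ∀ j, 1 ≤ j → j ≤ n - 2 →
      Function.Exact (fun f : w →ₗ[R] v j => (ψ j) ∘ₗ f)
        (fun f : w →ₗ[R] v (j + 1) => (ψ (j + 1)) ∘ₗ f))
    (ha₃ : Function.Surjective (fun f : w →ₗ[R] v (n - 1) => (ψ (n - 1)) ∘ₗ f))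
    -- (b) `Ext^i(w, v_j) = 0` for `1 ≤ i ≤ n-1` and `1 ≤ j ≤ n-1`
    (hb : ∀ i j : ℕ, 1 ≤ i → i ≤ n - 1 → 1 ≤ j → j ≤ n - 1 →
      Limits.IsZero (((Ext ℤ (ModuleCat.{0} R) i).obj
        (Opposite.op (ModuleCat.of R w))).obj (ModuleCat.of R (v j)))) :
    (∀ f : w →ₗ[R] (m ⧸ LinearMap.range θ), f = 0) ∧
    Limits.IsZero (((Ext ℤ (ModuleCat.{0} R) (n - 1)).obj
      (Opposite.op (ModuleCat.of R w))).obj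
        (ModuleCat.of R (m ⧸ LinearMap.range θ))) :=
  vanishing_lemma_general R n hn u m v θ π ψ hθπ hπψ hψ hsurj w ha₁ ha₃ hb
end

section
/- (Abelian-category form of the paper's lemma that covers are monomorphisms.) Let A be an abelian category and let U be a class of objects of A closed under epimorphic images: if u ∈ U and u → b is an epimorphism, then b ∈ U. If θ : u → m is a U-cover of an object m of A, then θ is a monomorphism. -/
open CategoryTheory

/-- Abelian-category form of the lemma that covers are monomorphisms: if `U` is
closed under epimorphic images and `θ : u ⟶ m` is a `U`-cover, then `θ` is a
monomorphism. -/
theorem cover_is_mono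
    {A : Type*} [Category A] [Abelian A]
    (U : Set A)
    -- `U` is closed under epimorphic images
    (hquot : ∀ u ∈ U, ∀ (b : A) (f : u ⟶ b), Epi f → b ∈ U)
    (u m : A) (θ : u ⟶ m) (hu : u ∈ U)
    -- `θ` is a `U`-precover of `m`
    (hprecover : ∀ w ∈ U, ∀ f : w ⟶ m, ∃ g : w ⟶ u, g ≫ θ = f)
    -- minimality: `θ` is a `U`-cover
    (hcover : ∀ g : u ⟶ u, g ≫ θ = θ → IsIso g) :
    Mono θ := by
  open Limits in
  -- Let `π : u ⟶ b` be the cokernel of `ker θ ⟶ u`, and `θ' : b ⟶ m` the induced map.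
  let π := cokernel.π (kernel.ι θ)
  let θ' := cokernel.desc (kernel.ι θ) θ (kernel.condition θ)
  have hπθ' : π ≫ θ' = θ := cokernel.π_desc _ _ _
  have hb : cokernel (kernel.ι θ) ∈ U := hquot u hu _ π inferInstance
  obtain ⟨g, hg⟩ := hprecover _ hb θ'
  have : IsIso (π ≫ g) := hcover _ (by rw [Category.assoc, hg, hπθ'])
  have hmono : Mono π := mono_of_mono π g
  have : IsIso π := isIso_of_mono_of_epi π
  have hk : kernel.ι θ = 0 :=
    zero_of_comp_mono π (cokernel.condition (kernel.ι θ))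
  exact Abelian.mono_of_kernel_ι_eq_zero θ hk
end

section
/- (Module-level form of the paper's lemma that n-exact sequences in an n-cluster tilting subcategory are exact.) Let k be a field, Λ a finite-dimensional k-algebra, and M₀ a finitely generated Λ-module such that Λ (as a left module over itself) belongs to add(M₀) and every finitely generated injective Λ-module belongs to add(M₀). Let n ≥ 1 and let 0 → m_{n+1} →μ_{n+1} m_n → ⋯ →μ₁ m₀ → 0 be a complex of modules with all m_i ∈ add(M₀) such that for every X ∈ add(M₀) both induced complexes 0 → Hom_Λ(X, m_{n+1}) → ⋯ → Hom_Λ(X, m₁) → Hom_Λ(X, m₀) and 0 → Hom_Λ(m₀, X) → ⋯ → Hom_Λ(m_n, X) → Hom_Λ(m_{n+1}, X) are exact. Then the sequence 0 → m_{n+1} → ⋯ → m₀ → 0 is an exact sequence of Λ-modules (in particular μ_{n+1} is injective and μ₁ is surjective). -/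
/-!
Since `Λ ∈ add M₀` and `Hom_Λ(Λ, -)` is the forgetful functor, exactness of the covariant
`Hom`-complex at `X = Λ` is exactness of the sequence at `m_{n+1}, …, m_1`. For the
surjectivity of `μ₁`, use `D Λ = Hom_k(Λ, k)`: it is finitely generated and injective (Baer's
criterion plus extension of `k`-linear functionals), hence in `add M₀`, and it cogenerates,
since `Hom_Λ(M, D Λ) ≅ Hom_k(M, k)`. Every map from `coker μ₁` to `D Λ` vanishes by injectivity
of `Hom(μ₁, D Λ)`, so the cokernel is zero.
-/

section HomFromRing

variable {R M N P : Type*} [Ring R] [AddCommGroup M] [AddCommGroup N] [AddCommGroup P]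
  [Module R M] [Module R N] [Module R P]

theorem LinearMap.injective_of_injective_postcomp {f : M →ₗ[R] N}
    (hf : Function.Injective fun φ : R →ₗ[R] M => f ∘ₗ φ) : Function.Injective f := by
  intro x y hxy
  have hspan : f ∘ₗ toSpanSingleton R M x = f ∘ₗ toSpanSingleton R M y :=
    LinearMap.ext fun r => by simp [hxy]
  simpa using LinearMap.congr_fun (hf hspan) 1

theorem Function.Exact.of_exact_postcomp {f : M →ₗ[R] N} {g : N →ₗ[R] P}
    (h : Function.Exact (fun φ : R →ₗ[R] M => f ∘ₗ φ) (fun φ : R →ₗ[R] N => g ∘ₗ φ)) :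
    Function.Exact f g := by
  intro y
  constructor
  · intro hy
    have hzero : g ∘ₗ LinearMap.toSpanSingleton R N y = 0 := LinearMap.ext fun r => by simp [hy]
    obtain ⟨φ, hφ⟩ := (h _).mp hzero
    exact ⟨φ 1, by simpa using LinearMap.congr_fun hφ 1⟩
  · rintro ⟨x, rfl⟩
    simpa using LinearMap.congr_fun (h.apply_apply_eq_zero (LinearMap.toSpanSingleton R M x)) 1

end HomFromRing

theorem LinearMap.surjective_of_injective_precomp {R A B Q : Type*} [Ring R] [AddCommGroup A]
    [AddCommGroup B] [AddCommGroup Q] [Module R A] [Module R B] [Module R Q] (f : A →ₗ[R] B)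
    (hQ : ∀ y : B ⧸ range f, y ≠ 0 → ∃ g : (B ⧸ range f) →ₗ[R] Q, g y ≠ 0)
    (hf : Function.Injective fun g : B →ₗ[R] Q => g ∘ₗ f) : Function.Surjective f := by
  intro y
  by_contra hy
  have hy' : (range f).mkQ y ≠ 0 := by
    rwa [Submodule.mkQ_apply, ne_eq, Submodule.Quotient.mk_eq_zero, mem_range]
  obtain ⟨g, hg⟩ := hQ _ hy'
  have hcomp : (g ∘ₗ (range f).mkQ) ∘ₗ f = 0 ∘ₗ f := by
    rw [comp_assoc, range_mkQ_comp, comp_zero, zero_comp]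
  exact hg (LinearMap.congr_fun (hf hcomp) y)

/-- `D Λ = Hom_k(Λ, k)`, a left `Λ`-module through the right regular action of `Λ` on itself:
`(a • f) x = f (x * a)`. -/
def RegularDual (k Λ : Type) [Field k] [Ring Λ] [Algebra k Λ] : Type := Λ →ₗ[k] k

namespace RegularDual

variable (k Λ : Type) [Field k] [Ring Λ] [Algebra k Λ]

instance : AddCommGroup (RegularDual k Λ) := inferInstanceAs (AddCommGroup (Λ →ₗ[k] k))
instance : Module k (RegularDual k Λ) := inferInstanceAs (Module k (Λ →ₗ[k] k))
instance : FunLike (RegularDual k Λ) Λ k := inferInstanceAs (FunLike (Λ →ₗ[k] k) Λ k)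
instance : LinearMapClass (RegularDual k Λ) k Λ k :=
  inferInstanceAs (LinearMapClass (Λ →ₗ[k] k) k Λ k)

instance : Module Λ (RegularDual k Λ) :=
  Module.compHom (R := (Λᵐᵒᵖ)ᵈᵐᵃ) (Λ →ₗ[k] k) (RingEquiv.opOp Λ).toRingHom

variable {k Λ}

theorem smul_apply (a : Λ) (f : RegularDual k Λ) (x : Λ) : (a • f) x = f (x * a) := rfl

@[ext]
theorem ext {f g : RegularDual k Λ} (h : ∀ x, f x = g x) : f = g := LinearMap.ext h

instance : IsScalarTower k Λ (RegularDual k Λ) :=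
  ⟨fun c a f => ext fun x => by
    simp only [smul_apply, mul_smul_comm]
    exact map_smul (f : Λ →ₗ[k] k) c (x * a)⟩

instance [FiniteDimensional k Λ] : Module.Finite Λ (RegularDual k Λ) :=
  have : Module.Finite k (RegularDual k Λ) := inferInstanceAs (Module.Finite k (Λ →ₗ[k] k))
  Module.Finite.of_restrictScalars_finite k Λ _

section Lift

variable {Y : Type} [AddCommGroup Y] [Module k Y] [Module Λ Y] [IsScalarTower k Λ Y]

def lift (φ : Y →ₗ[k] k) : Y →ₗ[Λ] RegularDual k Λ where
  toFun y := φ ∘ₗ LinearMap.smulRight LinearMap.id y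
  map_add' y y' := ext fun x => show φ (x • (y + y')) = φ (x • y) + φ (x • y') by
    rw [smul_add, map_add]
  map_smul' a y := ext fun x => show φ (x • a • y) = φ ((x * a) • y) by rw [mul_smul]

theorem lift_apply (φ : Y →ₗ[k] k) (y : Y) (x : Λ) : lift φ y x = φ (x • y) := rfl

end Lift

theorem baer : Module.Baer Λ (RegularDual k Λ) := by
  intro I g
  let φ : I →ₗ[k] k := LinearMap.applyₗ (R := k) (1 : Λ) ∘ₗ
    (g.restrictScalars k : I →ₗ[k] (Λ →ₗ[k] k))
  obtain ⟨ψ, hψ⟩ := LinearMap.exists_extend (p := I.restrictScalars k) φ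
  refine ⟨lift ψ, fun a ha => ext fun x => ?_⟩
  have hxa : x * a ∈ I := I.smul_mem x ha
  calc lift ψ a x = ψ (x * a) := rfl
    _ = g ⟨x * a, hxa⟩ 1 := LinearMap.congr_fun hψ ⟨x * a, hxa⟩
    _ = g ⟨a, ha⟩ x := by
      rw [show (⟨x * a, hxa⟩ : I) = x • ⟨a, ha⟩ from rfl, map_smul, smul_apply, one_mul]

instance : Module.Injective Λ (RegularDual k Λ) := baer.injective

theorem exists_apply_ne_zero {M : Type} [AddCommGroup M] [Module Λ M] {y : M} (hy : y ≠ 0) :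
    ∃ g : M →ₗ[Λ] RegularDual k Λ, g y ≠ 0 := by
  let : Module k M := .compHom M (algebraMap k Λ)
  have : IsScalarTower k Λ M := .of_compHom k Λ M
  obtain ⟨φ, hφ⟩ := Module.Projective.exists_dual_ne_zero k hy
  refine ⟨lift φ, fun h => hφ ?_⟩
  have h1 := DFunLike.congr_fun h 1
  rw [lift_apply, one_smul] at h1
  exact h1

end RegularDual

/-- `N` belongs to `add M₀`: `N` is (isomorphic to) a direct summand of a finite
direct sum `M₀^{⊕ d}` of copies of `M₀`. -/
def MemAdd (Λ : Type*) [Ring Λ] (M₀ : Type*) [AddCommGroup M₀] [Module Λ M₀]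
    (N : Type*) [AddCommGroup N] [Module Λ N] : Prop :=
  ∃ (d : ℕ) (s : N →ₗ[Λ] (Fin d → M₀)) (r : (Fin d → M₀) →ₗ[Λ] N),
    r ∘ₗ s = LinearMap.id

theorem n_exact_sequence_is_exact_general
    (k : Type) [Field k] (Λ : Type) [Ring Λ] [Algebra k Λ] [FiniteDimensional k Λ]
    (M₀ : Type) [AddCommGroup M₀] [Module Λ M₀]
    -- `Λ` belongs to `add M₀`
    (hΛ : MemAdd Λ M₀ Λ)
    -- every finitely generated injective module belongs to `add M₀`
    (hinj : ∀ (I : Type) [AddCommGroup I] [Module Λ I],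
      Module.Finite Λ I → Module.Injective Λ I → MemAdd Λ M₀ I)
    (n : ℕ)
    (m : ℕ → Type) [∀ i, AddCommGroup (m i)] [∀ i, Module Λ (m i)]
    (μ : ∀ i, m (i + 1) →ₗ[Λ] m i)
    -- for every `X ∈ add M₀`, the complex
    -- `0 → Hom(X, m_{n+1}) → ⋯ → Hom(X, m₁) → Hom(X, m₀)` is exact
    (hcov : ∀ (X : Type) [AddCommGroup X] [Module Λ X], MemAdd Λ M₀ X →
      Function.Injective (fun f : X →ₗ[Λ] m (n + 1) => (μ n) ∘ₗ f) ∧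
      ∀ i, i < n →
        Function.Exact (fun f : X →ₗ[Λ] m (i + 2) => (μ (i + 1)) ∘ₗ f)
          (fun f : X →ₗ[Λ] m (i + 1) => (μ i) ∘ₗ f))
    -- for every `X ∈ add M₀`, the complex
    -- `0 → Hom(m₀, X) → ⋯ → Hom(m_n, X) → Hom(m_{n+1}, X)` is exact
    (hcontra : ∀ (X : Type) [AddCommGroup X] [Module Λ X], MemAdd Λ M₀ X →
      Function.Injective (fun g : m 0 →ₗ[Λ] X => g ∘ₗ (μ 0)) ∧
      ∀ i, i < n →
        Function.Exact (fun g : m i →ₗ[Λ] X => g ∘ₗ (μ i))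
          (fun g : m (i + 1) →ₗ[Λ] X => g ∘ₗ (μ (i + 1)))) :
    Function.Injective (μ n) ∧
    Function.Surjective (μ 0) ∧
    ∀ i, i < n → Function.Exact (μ (i + 1)) (μ i) := by
  obtain ⟨hinjΛ, hexactΛ⟩ := hcov Λ hΛ
  have hD : MemAdd Λ M₀ (RegularDual k Λ) := hinj _ inferInstance inferInstance
  exact ⟨(μ n).injective_of_injective_postcomp hinjΛ,
    (μ 0).surjective_of_injective_precomp (fun _ hy => RegularDual.exists_apply_ne_zero hy)
      (hcontra _ hD).1,
    fun i hi => (hexactΛ i hi).of_exact_postcomp⟩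

/-- Module-level form of the lemma that `n`-exact sequences in an `n`-cluster
tilting subcategory are exact: if `Λ ∈ add M₀`, every finitely generated
injective module is in `add M₀`, and `0 → m_{n+1} →μ_{n+1} ⋯ →μ₁ m₀ → 0` is a
complex in `add M₀` all of whose induced `Hom`-complexes into and out of objects
of `add M₀` are exact, then the sequence is exact as a sequence of `Λ`-modules.
(Here `μ i : m (i+1) →ₗ m i` is the paper's `μ_{i+1}`.) -/
theorem n_exact_sequence_is_exact
    (k : Type) [Field k] (Λ : Type) [Ring Λ] [Algebra k Λ] [FiniteDimensional k Λ]
    (M₀ : Type) [AddCommGroup M₀] [Module Λ M₀] [Module.Finite Λ M₀]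
    -- `Λ` belongs to `add M₀`
    (hΛ : MemAdd Λ M₀ Λ)
    -- every finitely generated injective module belongs to `add M₀`
    (hinj : ∀ (I : Type) [AddCommGroup I] [Module Λ I],
      Module.Finite Λ I → Module.Injective Λ I → MemAdd Λ M₀ I)
    (n : ℕ) (hn : 1 ≤ n)
    (m : ℕ → Type) [∀ i, AddCommGroup (m i)] [∀ i, Module Λ (m i)]
    (hm : ∀ i, i ≤ n + 1 → MemAdd Λ M₀ (m i))
    (μ : ∀ i, m (i + 1) →ₗ[Λ] m i)
    -- the sequence is a complex
    (hcplx : ∀ i, i < n → (μ i) ∘ₗ (μ (i + 1)) = 0)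
    -- for every `X ∈ add M₀`, the complex
    -- `0 → Hom(X, m_{n+1}) → ⋯ → Hom(X, m₁) → Hom(X, m₀)` is exact
    (hcov : ∀ (X : Type) [AddCommGroup X] [Module Λ X], MemAdd Λ M₀ X →
      Function.Injective (fun f : X →ₗ[Λ] m (n + 1) => (μ n) ∘ₗ f) ∧
      ∀ i, i < n →
        Function.Exact (fun f : X →ₗ[Λ] m (i + 2) => (μ (i + 1)) ∘ₗ f)
          (fun f : X →ₗ[Λ] m (i + 1) => (μ i) ∘ₗ f))
    -- for every `X ∈ add M₀`, the complex
    -- `0 → Hom(m₀, X) → ⋯ → Hom(m_n, X) → Hom(m_{n+1}, X)` is exact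
    (hcontra : ∀ (X : Type) [AddCommGroup X] [Module Λ X], MemAdd Λ M₀ X →
      Function.Injective (fun g : m 0 →ₗ[Λ] X => g ∘ₗ (μ 0)) ∧
      ∀ i, i < n →
        Function.Exact (fun g : m i →ₗ[Λ] X => g ∘ₗ (μ i))
          (fun g : m (i + 1) →ₗ[Λ] X => g ∘ₗ (μ (i + 1)))) :
    Function.Injective (μ n) ∧
    Function.Surjective (μ 0) ∧
    ∀ i, i < n → Function.Exact (μ (i + 1)) (μ i) :=
  n_exact_sequence_is_exact_general k Λ M₀ hΛ hinj n m μ hcov hcontra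
end

section
/- (Case n = 1 of the paper's theorem that add(p) is a torsion class for a simple projective module p.) Let k be a field, Λ a finite-dimensional k-algebra, and p a simple projective finitely generated left Λ-module. Then add(p) is a torsion class in the category of finitely generated Λ-modules: for every finitely generated module m there is a short exact sequence 0 → u → m → v → 0 in which u is isomorphic to p^{⊕i} for some i ∈ ℕ and Hom_Λ(p, v) = 0. -/
/-!
Among the submodules of `m` isomorphic to some `p^i` (there is one, `⊥`) pick a maximal one `S`,
which exists because `m` is Noetherian. A nonzero map `p → m ⧸ S` is injective since `p` is
simple, and lifts to `m` since `p` is projective; the lift together with `S` spans a submodule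
`S ⊕ p ≅ p^(i+1)` strictly above `S`, contradicting maximality.
-/

open Function LinearMap

theorem Submodule.exists_gt_equiv_prod_of_projective {R M P : Type*} [Ring R] [AddCommGroup M]
    [Module R M] [AddCommGroup P] [Module R P] [Module.Projective R P] [Nontrivial P]
    (S : Submodule R M) (f : P →ₗ[R] M ⧸ S) (hf : Injective f) :
    ∃ T : Submodule R M, S < T ∧ Nonempty (T ≃ₗ[R] S × P) := by
  obtain ⟨g, hg⟩ := Module.projective_lifting_property S.mkQ f S.mkQ_surjective
  have hgS : ∀ x, g x ∈ S → x = 0 := fun x hx ↦ hf <| by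
    rw [map_zero, ← hg, LinearMap.comp_apply, mkQ_apply, (Quotient.mk_eq_zero S).mpr hx]
  have hinj : Injective (S.subtype.coprod g) := by
    rw [← ker_eq_bot, eq_bot_iff]
    rintro ⟨s, x⟩ hsx
    have hx : x = 0 := hgS x <| by
      rw [mem_ker, coprod_apply, add_eq_zero_iff_neg_eq] at hsx
      exact hsx ▸ S.neg_mem s.2
    subst hx
    simpa using hsx
  refine ⟨range (S.subtype.coprod g), lt_of_le_of_ne ?_ ?_,
    ⟨(LinearEquiv.ofInjective _ hinj).symm⟩⟩
  · exact fun s hs ↦ ⟨(⟨s, hs⟩, 0), by simp⟩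
  · intro hST
    obtain ⟨x, hx⟩ := exists_ne (0 : P)
    exact hx <| hgS x <| hST ▸ ⟨(0, x), by simp⟩

theorem add_simple_projective_torsion_class_general
    (k : Type) [Field k] (Λ : Type) [Ring Λ] [Algebra k Λ] [FiniteDimensional k Λ]
    (p : Type) [AddCommGroup p] [Module Λ p]
    (hsimple : IsSimpleModule Λ p) (hproj : Module.Projective Λ p)
    (m : Type) [AddCommGroup m] [Module Λ m] [Module.Finite Λ m] :
    ∃ (S : Submodule Λ m) (i : ℕ),
      Nonempty (S ≃ₗ[Λ] (Fin i → p)) ∧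
      ∀ f : p →ₗ[Λ] (m ⧸ S), f = 0 := by
  have : IsNoetherianRing Λ := .of_finite k Λ
  have : Nontrivial p := IsSimpleModule.nontrivial Λ p
  have hm : IsNoetherian Λ m := inferInstance
  obtain ⟨S, ⟨i, ⟨e⟩⟩, hS⟩ := set_has_maximal_iff_noetherian.mpr hm
    {S | ∃ i, Nonempty (S ≃ₗ[Λ] (Fin i → p))} ⟨⊥, 0, ⟨LinearEquiv.ofSubsingleton _ _⟩⟩
  refine ⟨S, i, ⟨e⟩, fun f ↦ by_contra fun hf ↦ ?_⟩
  obtain ⟨T, hST, ⟨eT⟩⟩ :=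
    S.exists_gt_equiv_prod_of_projective f (injective_of_ne_zero hf)
  exact hS T ⟨i + 1, ⟨eT ≪≫ₗ (e.prodCongr (.refl Λ p)) ≪≫ₗ .prodComm Λ _ _ ≪≫ₗ
    Fin.consLinearEquiv Λ fun _ ↦ p⟩⟩ hST

/-- Case `n = 1` of the theorem that `add p` is a torsion class for a simple
projective module `p`: every finitely generated module `m` has a submodule `S`
isomorphic to `p^{⊕ i}` for some `i` with `Hom(p, m/S) = 0`; equivalently there
is a short exact sequence `0 → u → m → v → 0` with `u ≅ p^{⊕ i}` and
`Hom(p, v) = 0`. -/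
theorem add_simple_projective_torsion_class
    (k : Type) [Field k] (Λ : Type) [Ring Λ] [Algebra k Λ] [FiniteDimensional k Λ]
    (p : Type) [AddCommGroup p] [Module Λ p] [Module.Finite Λ p]
    (hsimple : IsSimpleModule Λ p) (hproj : Module.Projective Λ p)
    (m : Type) [AddCommGroup m] [Module Λ m] [Module.Finite Λ m] :
    ∃ (S : Submodule Λ m) (i : ℕ),
      Nonempty (S ≃ₗ[Λ] (Fin i → p)) ∧
      ∀ f : p →ₗ[Λ] (m ⧸ S), f = 0 :=
  add_simple_projective_torsion_class_general k Λ p hsimple hproj m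
end

section
/- (Case n = 1 of the paper's lemma characterizing torsion triangles via precovers.) Let C be a pretriangulated category, X a class of objects of C, and let x →ξ c →γ y →φ Σx be a distinguished triangle with x ∈ X. Then the following are equivalent: (1) Hom_C(x̃, y) = 0 for every x̃ ∈ X; (2) ξ is an X-precover of c and φ ∘ g = 0 for every morphism g : x̃ → y with x̃ ∈ X. -/
open CategoryTheory Limits Pretriangulated

namespace CategoryTheory.Pretriangulated

variable {C : Type*} [Category C] [HasZeroObject C] [Preadditive C] [HasShift C ℤ]
  [∀ n : ℤ, (shiftFunctor C n).Additive] [Pretriangulated C]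

lemma eq_zero_of_comp_mor₃_eq_zero {T : Triangle C} (hT : T ∈ distTriang C) {A : C}
    (hlift : ∀ g : A ⟶ T.obj₂, ∃ k : A ⟶ T.obj₁, k ≫ T.mor₁ = g)
    (f : A ⟶ T.obj₃) (hf : f ≫ T.mor₃ = 0) : f = 0 := by
  obtain ⟨g, rfl⟩ := Triangle.coyoneda_exact₃ T hT f hf
  obtain ⟨k, rfl⟩ := hlift g
  rw [Category.assoc, comp_distTriang_mor_zero₁₂ T hT, comp_zero]

end CategoryTheory.Pretriangulated

/-- Case `n = 1` of the lemma characterizing torsion triangles via precovers: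
for a distinguished triangle `x ⟶ξ c ⟶γ y ⟶φ Σx` with `x ∈ X`, one has
`Hom(x̃, y) = 0` for all `x̃ ∈ X` iff `ξ` is an `X`-precover of `c` and
`φ ∘ g = 0` for every `g : x̃ ⟶ y` with `x̃ ∈ X`. -/
theorem torsion_triangle_iff_precover
    {C : Type*} [Category C] [HasZeroObject C] [Preadditive C] [HasShift C ℤ]
    [∀ n : ℤ, (shiftFunctor C n).Additive] [Pretriangulated C]
    (X : Set C)
    (x c y : C) (ξ : x ⟶ c) (γ : c ⟶ y) (φ : y ⟶ x⟦(1 : ℤ)⟧)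
    (hT : Triangle.mk ξ γ φ ∈ distTriang C)
    (hx : x ∈ X) :
    ((∀ x' ∈ X, ∀ f : x' ⟶ y, f = 0)
      ↔
    ((∀ x' ∈ X, ∀ f : x' ⟶ c, ∃ g : x' ⟶ x, g ≫ ξ = f) ∧
      (∀ x' ∈ X, ∀ g : x' ⟶ y, g ≫ φ = 0))) := by
  constructor
  · intro hzero
    refine ⟨fun x' hx' f => ?_, fun x' hx' g => by rw [hzero x' hx' g, zero_comp]⟩
    obtain ⟨g, hg⟩ := Triangle.coyoneda_exact₂ _ hT f (hzero x' hx' (f ≫ γ))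
    exact ⟨g, hg.symm⟩
  · rintro ⟨hprecover, hφ⟩ x' hx' f
    exact eq_zero_of_comp_mor₃_eq_zero hT (hprecover x' hx') f (hφ x' hx' f)
end
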